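/- arXiv:2307.01471 — 2 statements merged into one kernel-verified Lean document; each statement's English description precedes it below -/
import Mathlib

section
/- Let γ = (√5−1)/2 and let W be the Wythoff swap sequence. Then for all n ≥ 1, (n+1)·⌊(n+1)γ⌋ − n·⌊nγ⌋ = W(n). -/
/-!
Write `γ = φ⁻¹`, `a = ⌊nγ⌋` and `b = ⌊(n+1)γ⌋`; since `γ < 1`, either `b = a + 1` or `b = a`.
Multiplying `nγ < b < (n+1)γ` by `φ` shows that `n = L(b)` in the first case, and then
`W(n) = U(b) = n + b` because `φ² = φ + 1`. In the second case the same computation, applied to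
`n - a`, shows `L(n - a) = a` and `U(n - a) = n`, so `W(n) = a`. Both values agree with
`(n+1)b - na`. All inequalities are strict because `nγ` is irrational for `n ≠ 0`.
-/

theorem Nat.floor_add_eq_or_of_le_one {x c : ℝ} (hx : 0 ≤ x) (hc₀ : 0 ≤ c) (hc₁ : c ≤ 1) :
    ⌊x + c⌋₊ = ⌊x⌋₊ ∨ ⌊x + c⌋₊ = ⌊x⌋₊ + 1 := by
  have hlow : ⌊x⌋₊ ≤ ⌊x + c⌋₊ := Nat.floor_le_floor (by linarith)
  have hupp : ⌊x + c⌋₊ ≤ ⌊x⌋₊ + 1 := Nat.floor_add_one hx ▸ Nat.floor_le_floor (by linarith)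
  omega

namespace Real

open scoped goldenRatio

theorem inv_goldenRatio_eq : φ⁻¹ = (√5 - 1) / 2 := by
  rw [inv_goldenRatio, goldenConj]
  ring

theorem inv_goldenRatio_eq_sub_one : φ⁻¹ = φ - 1 := by
  rw [inv_goldenRatio_eq, goldenRatio]
  ring

theorem inv_goldenRatio_le_one : φ⁻¹ ≤ 1 :=
  inv_le_one_of_one_le₀ one_lt_goldenRatio.le

theorem mul_inv_goldenRatio_le {x : ℝ} (hx : 0 ≤ x) : x * φ⁻¹ ≤ x :=
  mul_le_of_le_one_right hx inv_goldenRatio_le_one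

theorem floor_natCast_mul_inv_goldenRatio_lt {n : ℕ} (hn : n ≠ 0) :
    (⌊(n : ℝ) * φ⁻¹⌋₊ : ℝ) < n * φ⁻¹ :=
  (Nat.floor_le (by positivity)).lt_of_ne
    ((goldenRatio_irrational.inv.natCast_mul hn).ne_nat _).symm

theorem floor_natCast_mul_goldenRatio_sq (k : ℕ) :
    ⌊(k : ℝ) * φ ^ 2⌋₊ = ⌊(k : ℝ) * φ⌋₊ + k := by
  rw [goldenRatio_sq, mul_add_one, Nat.floor_add_natCast (by positivity)]

theorem floor_natCast_mul_goldenRatio_eq {n k : ℕ} (h₁ : n * φ⁻¹ < k) (h₂ : k < (n + 1) * φ⁻¹) :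
    ⌊(k : ℝ) * φ⌋₊ = n := by
  rw [mul_inv_lt_iff₀ goldenRatio_pos] at h₁
  rw [lt_mul_inv_iff₀ goldenRatio_pos] at h₂
  rw [Nat.floor_eq_iff (by positivity)]
  exact ⟨h₁.le, h₂⟩

theorem floor_sub_mul_goldenRatio_eq {n a : ℕ} (h₁ : a < n * φ⁻¹) (h₂ : (n + 1) * φ⁻¹ < a + 1) :
    ⌊((n - a : ℕ) : ℝ) * φ⌋₊ = a := by
  have han : a ≤ n := by exact_mod_cast (h₁.trans_le (mul_inv_goldenRatio_le n.cast_nonneg)).le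
  rw [lt_mul_inv_iff₀ goldenRatio_pos] at h₁
  rw [mul_inv_lt_iff₀ goldenRatio_pos] at h₂
  apply floor_natCast_mul_goldenRatio_eq <;>
  · push_cast [han, inv_goldenRatio_eq_sub_one]
    linarith

end Real

theorem wythoff_swap_eq_G_difference_general
    (φ γ : ℝ) (hφ : φ = (1 + Real.sqrt 5) / 2) (hγ : γ = (Real.sqrt 5 - 1) / 2)
    (L U : ℕ → ℕ)
    (hL : ∀ n : ℕ, L n = ⌊(n : ℝ) * φ⌋₊)
    (hU : ∀ n : ℕ, U n = ⌊(n : ℝ) * φ ^ 2⌋₊)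
    (W : ℕ → ℕ)
    (hWL : ∀ k : ℕ, 1 ≤ k → W (L k) = U k)
    (hWU : ∀ k : ℕ, 1 ≤ k → W (U k) = L k) :
    ∀ n : ℕ, 1 ≤ n →
      (n + 1) * ⌊((n : ℝ) + 1) * γ⌋₊ - n * ⌊(n : ℝ) * γ⌋₊ = W n := by
  rw [← Real.inv_goldenRatio_eq] at hγ
  change φ = Real.goldenRatio at hφ
  subst hφ hγ
  intro n hn
  set a := ⌊(n : ℝ) * Real.goldenRatio⁻¹⌋₊
  set b := ⌊((n : ℝ) + 1) * Real.goldenRatio⁻¹⌋₊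
  have ha : (a : ℝ) < n * Real.goldenRatio⁻¹ :=
    Real.floor_natCast_mul_inv_goldenRatio_lt (by omega)
  have hb : (b : ℝ) < (n + 1) * Real.goldenRatio⁻¹ := by
    simpa only [Nat.cast_succ] using
      Real.floor_natCast_mul_inv_goldenRatio_lt (n := n + 1) n.succ_ne_zero
  have hba : b = a ∨ b = a + 1 := by
    simpa only [b, add_one_mul] using Nat.floor_add_eq_or_of_le_one (by positivity)
      (inv_pos.2 Real.goldenRatio_pos).le Real.inv_goldenRatio_le_one
  rcases hba with hba | hba
  · have han : a < n := by exact_mod_cast ha.trans_le (Real.mul_inv_goldenRatio_le n.cast_nonneg)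
    have hLa : L (n - a) = a := by
      rw [hL]
      exact Real.floor_sub_mul_goldenRatio_eq ha (hba ▸ Nat.lt_floor_add_one _)
    have hUn : U (n - a) = n := by
      rw [hU, Real.floor_natCast_mul_goldenRatio_sq, ← hL, hLa]
      omega
    rw [← hUn, hWU _ (by omega), hLa, hba, add_one_mul, Nat.add_sub_cancel_left]
  · have hLb : L b = n := by
      rw [hL]
      refine Real.floor_natCast_mul_goldenRatio_eq ?_ hb
      rw [hba, Nat.cast_succ]
      exact Nat.lt_floor_add_one _
    have hUb : U b = n + b := by
      rw [hU, Real.floor_natCast_mul_goldenRatio_sq, ← hL, hLb]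
    rw [← hLb, hWL _ (by omega), hUb, hLb, hba]
    have : (n + 1) * (a + 1) = n * a + (n + (a + 1)) := by ring
    omega

/-- For the Wythoff swap sequence `W` and `γ = (√5−1)/2`, one has
`(n+1)·⌊(n+1)γ⌋ − n·⌊nγ⌋ = W(n)` for all `n ≥ 1`, i.e.,
`(n+1)·G(n) − n·G(n−1) = W(n)` for Hofstadter's G-sequence `G`. -/
theorem wythoff_swap_eq_G_difference
    (φ γ : ℝ) (hφ : φ = (1 + Real.sqrt 5) / 2) (hγ : γ = (Real.sqrt 5 - 1) / 2)
    (L U : ℕ → ℕ)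
    (hL : ∀ n : ℕ, L n = ⌊(n : ℝ) * φ⌋₊)
    (hU : ∀ n : ℕ, U n = ⌊(n : ℝ) * φ ^ 2⌋₊)
    (W : ℕ → ℕ) (hW0 : W 0 = 0)
    (hWL : ∀ k : ℕ, 1 ≤ k → W (L k) = U k)
    (hWU : ∀ k : ℕ, 1 ≤ k → W (U k) = L k) :
    ∀ n : ℕ, 1 ≤ n →
      (n + 1) * ⌊((n : ℝ) + 1) * γ⌋₊ - n * ⌊(n : ℝ) * γ⌋₊ = W n :=
  wythoff_swap_eq_G_difference_general φ γ hφ hγ L U hL hU W hWL hWU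
end

section
/- Let f be Venkatachala's greedy sequence and W the Wythoff swap sequence. Then W(n) = f(n+1) − 1 for all n ≥ 1. -/
/-!
Put `g n = W (n - 1) + 1`, so that `g 1 = 1` because `W 0 = 0`. The greedy conditions determine a
sequence, so it suffices to check that `g` satisfies them. Let `c n` be the number of `i ≥ 0` with
`⌊iφ⌋ < n`. Rayleigh's theorem says that every `n` is either some `L k` or some `U k`, and in
both cases one checks `g 1 + ⋯ + g n = n * c n`. Hence the candidates for the `(n+1)`-st term are
the positive `m ≡ c n (mod n + 1)` not taken yet, and since `W` is an involution `m` is taken iff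
`W (m - 1) < n`. If `n = U k`, then `c n = L k + 1 = g (n + 1)` is the least positive element of
its residue class. If `n = L k`, then `c n = k = g (W (k - 1) + 1)` is already taken, and the next
candidate is `k + n + 1 = U k + 1 = g (n + 1)`.
-/

open Finset Real

lemma natCast_mem_beattySeq_pos_iff {r : ℝ} (hr : 0 ≤ r) (n : ℕ) :
    (n : ℤ) ∈ {beattySeq r k | k > 0} ↔ ∃ k : ℕ, 0 < k ∧ ⌊(k : ℝ) * r⌋₊ = n := by
  constructor
  · rintro ⟨k, hk, h⟩
    lift k to ℕ using hk.le
    refine ⟨k, by exact_mod_cast hk, ?_⟩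
    rw [beattySeq, Int.cast_natCast, ← Int.natCast_floor_eq_floor (by positivity)] at h
    exact_mod_cast h
  · rintro ⟨k, hk, rfl⟩
    refine ⟨k, by exact_mod_cast hk, ?_⟩
    rw [beattySeq, Int.cast_natCast, ← Int.natCast_floor_eq_floor (by positivity)]

lemma Irrational.xor_exists_natFloor_mul {r s : ℝ} (hrs : r.HolderConjugate s)
    (hr : Irrational r) {n : ℕ} (hn : 0 < n) :
    Xor (∃ k : ℕ, 0 < k ∧ ⌊(k : ℝ) * r⌋₊ = n) (∃ k : ℕ, 0 < k ∧ ⌊(k : ℝ) * s⌋₊ = n) := by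
  have h := Set.ext_iff.mp (hr.beattySeq_symmDiff_beattySeq_pos hrs) n
  rwa [Set.mem_symmDiff, natCast_mem_beattySeq_pos_iff hrs.nonneg,
    natCast_mem_beattySeq_pos_iff hrs.symm.nonneg, Set.mem_ofPred_eq, Nat.cast_pos,
    iff_true_intro hn, iff_true] at h

lemma holderConjugate_goldenRatio_sq : goldenRatio.HolderConjugate (goldenRatio ^ 2) := by
  rw [holderConjugate_iff, ← inv_pow, inv_goldenRatio, neg_sq, goldenConj_sq]
  exact ⟨one_lt_goldenRatio, by ring⟩

lemma goldenRatio_mul_goldenRatio_sub_one : goldenRatio * (goldenRatio - 1) = 1 := by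
  linarith [goldenRatio_sq]

lemma Nat.dvd_mul_add_iff_modEq (n c m : ℕ) : n + 1 ∣ n * c + m ↔ m ≡ c [MOD n + 1] := by
  have hc : n * c + c ≡ 0 [MOD n + 1] := Nat.modEq_zero_iff_dvd.2 ⟨c, by ring⟩
  rw [← Nat.modEq_zero_iff_dvd]
  exact ⟨fun hm => Nat.ModEq.add_left_cancel' (n * c) (hm.trans hc.symm),
    fun hm => (hm.add_left (n * c)).trans hc⟩

noncomputable def lowerWythoff (n : ℕ) : ℕ := ⌊(n : ℝ) * goldenRatio⌋₊

noncomputable def upperWythoff (n : ℕ) : ℕ := ⌊(n : ℝ) * goldenRatio ^ 2⌋₊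

lemma upperWythoff_eq (k : ℕ) : upperWythoff k = lowerWythoff k + k := by
  rw [upperWythoff, lowerWythoff, goldenRatio_sq, mul_add, mul_one,
    Nat.floor_add_natCast (by positivity)]

@[simp] lemma lowerWythoff_zero : lowerWythoff 0 = 0 := by simp [lowerWythoff]

lemma lowerWythoff_strictMono : StrictMono lowerWythoff := by
  refine strictMono_nat_of_lt_succ fun k => ?_
  calc lowerWythoff k < ⌊(k : ℝ) * goldenRatio + 1⌋₊ := by
        rw [Nat.floor_add_one (by positivity)]; exact Nat.lt_succ_self _
    _ ≤ lowerWythoff (k + 1) := by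
        refine Nat.floor_le_floor ?_
        push_cast
        linarith [one_lt_goldenRatio]

lemma lowerWythoff_lt_iff {j n : ℕ} : lowerWythoff j < n ↔ (j : ℝ) * goldenRatio < n :=
  Nat.floor_lt (by positivity)

lemma lowerWythoff_or_upperWythoff (n : ℕ) :
    (∃ k, lowerWythoff k = n) ∨ ∃ k, 0 < k ∧ upperWythoff k = n := by
  rcases n.eq_zero_or_pos with rfl | hn
  · exact .inl ⟨0, lowerWythoff_zero⟩
  · exact (goldenRatio_irrational.xor_exists_natFloor_mul holderConjugate_goldenRatio_sq hn).or.imp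
      (fun ⟨k, _, hk⟩ => ⟨k, hk⟩) id

lemma lowerWythoff_ne_upperWythoff (j : ℕ) {k : ℕ} (hk : 0 < k) :
    lowerWythoff j ≠ upperWythoff k := by
  rcases j.eq_zero_or_pos with rfl | hj
  · rw [lowerWythoff_zero, upperWythoff_eq]; omega
  · intro h
    have hpos : 0 < upperWythoff k := by rw [upperWythoff_eq]; omega
    exact ((xor_iff_or_and_not_and _ _).1 (goldenRatio_irrational.xor_exists_natFloor_mul
      holderConjugate_goldenRatio_sq hpos)).2 ⟨⟨j, hj, h⟩, ⟨k, hk, rfl⟩⟩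

lemma lowerWythoff_lt_mul {k : ℕ} (hk : 0 < k) : (lowerWythoff k : ℝ) < k * goldenRatio :=
  (Nat.floor_le (by positivity)).lt_of_ne fun h =>
    (goldenRatio_irrational.natCast_mul hk.ne') ⟨lowerWythoff k, by push_cast; exact h⟩

lemma lowerWythoff_lt_upperWythoff_iff (j : ℕ) {k : ℕ} (hk : 0 < k) :
    lowerWythoff j < upperWythoff k ↔ j ≤ lowerWythoff k := by
  have hlt := lowerWythoff_lt_mul hk
  have hgt : (k : ℝ) * goldenRatio < lowerWythoff k + 1 := Nat.lt_floor_add_one _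
  have hφ := one_lt_goldenRatio
  have hφφ := goldenRatio_mul_goldenRatio_sub_one
  rw [lowerWythoff_lt_iff, upperWythoff_eq, Nat.cast_add]
  constructor
  · intro h
    by_contra! hj
    have : (lowerWythoff k : ℝ) + 1 ≤ j := by exact_mod_cast hj
    nlinarith [mul_pos (sub_pos.2 hgt) (sub_pos.2 hφ)]
  · intro hj
    have : (j : ℝ) ≤ lowerWythoff k := by exact_mod_cast hj
    nlinarith [mul_pos (sub_pos.2 hlt) (sub_pos.2 hφ)]

lemma upperWythoff_lt_lowerWythoff {j k : ℕ} (h : lowerWythoff j < k) :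
    upperWythoff j < lowerWythoff k := by
  have hj : (j : ℝ) * goldenRatio < k := lowerWythoff_lt_iff.1 h
  have : (k : ℝ) + j ≤ k * goldenRatio := by
    nlinarith [goldenRatio_mul_goldenRatio_sub_one, one_lt_goldenRatio]
  rw [upperWythoff_eq, Nat.lt_iff_add_one_le]
  refine Nat.le_floor ?_
  have : ((lowerWythoff j + 1 : ℕ) : ℝ) ≤ k := by exact_mod_cast h
  push_cast at this ⊢
  linarith

noncomputable def lowerWythoffCount (n : ℕ) : ℕ := {i | lowerWythoff i < n}.ncard

lemma lowerWythoffCount_eq {n k : ℕ} (h : ∀ i, lowerWythoff i < n ↔ i < k) :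
    lowerWythoffCount n = k := by
  have hIio : {i | lowerWythoff i < n} = Set.Iio k := Set.ext h
  rw [lowerWythoffCount, hIio, Set.ncard_Iio_nat]

lemma lowerWythoffCount_lowerWythoff (k : ℕ) : lowerWythoffCount (lowerWythoff k) = k :=
  lowerWythoffCount_eq fun _ => lowerWythoff_strictMono.lt_iff_lt

lemma lowerWythoffCount_lowerWythoff_add_one (k : ℕ) :
    lowerWythoffCount (lowerWythoff k + 1) = k + 1 :=
  lowerWythoffCount_eq fun _ => by
    rw [Nat.lt_add_one_iff, Nat.lt_add_one_iff, lowerWythoff_strictMono.le_iff_le]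

lemma lowerWythoffCount_upperWythoff {k : ℕ} (hk : 0 < k) :
    lowerWythoffCount (upperWythoff k) = lowerWythoff k + 1 :=
  lowerWythoffCount_eq fun i => by rw [lowerWythoff_lt_upperWythoff_iff i hk, Nat.lt_add_one_iff]

lemma lowerWythoffCount_upperWythoff_add_one {k : ℕ} (hk : 0 < k) :
    lowerWythoffCount (upperWythoff k + 1) = lowerWythoff k + 1 :=
  lowerWythoffCount_eq fun i => by
    rw [Nat.lt_add_one_iff, le_iff_lt_or_eq, or_iff_left (lowerWythoff_ne_upperWythoff i hk),
      lowerWythoff_lt_upperWythoff_iff i hk, Nat.lt_add_one_iff]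

def VenkatachalaAdmissible (f : ℕ → ℕ) (n m : ℕ) : Prop :=
  0 < m ∧ (∀ i ∈ Icc 1 (n - 1), f i ≠ m) ∧ n ∣ (∑ i ∈ Icc 1 (n - 1), f i) + m

lemma venkatachalaAdmissible_congr {f g : ℕ → ℕ} {n : ℕ} (h : ∀ i ∈ Icc 1 (n - 1), f i = g i) :
    VenkatachalaAdmissible f n = VenkatachalaAdmissible g n := by
  funext m
  unfold VenkatachalaAdmissible
  rw [sum_congr rfl h]
  exact propext <| and_congr_right' <| and_congr_left' <| forall₂_congr fun i hi => by rw [h i hi]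

lemma eq_of_isLeast_venkatachalaAdmissible {f g : ℕ → ℕ} (h1 : f 1 = g 1)
    (hf : ∀ n, 2 ≤ n → IsLeast {m | VenkatachalaAdmissible f n m} (f n))
    (hg : ∀ n, 2 ≤ n → IsLeast {m | VenkatachalaAdmissible g n m} (g n)) :
    ∀ n, 0 < n → f n = g n := by
  intro n
  induction n using Nat.strong_induction_on with
  | _ n ih =>
  intro hn
  obtain rfl | hn2 : n = 1 ∨ 2 ≤ n := by omega
  · exact h1
  · refine (hf n hn2).unique ?_
    rw [venkatachalaAdmissible_congr fun i hi => ih i (by grind) (by grind)]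
    exact hg n hn2

def IsWythoffSwap (W : ℕ → ℕ) : Prop :=
  ∀ k, W (lowerWythoff k) = upperWythoff k ∧ W (upperWythoff k) = lowerWythoff k

namespace IsWythoffSwap

variable {W : ℕ → ℕ}

lemma involutive (hW : IsWythoffSwap W) : Function.Involutive W := fun n => by
  rcases lowerWythoff_or_upperWythoff n with ⟨k, rfl⟩ | ⟨k, -, rfl⟩
  · rw [(hW k).1, (hW k).2]
  · rw [(hW k).2, (hW k).1]

lemma lt_lowerWythoff_add_one (hW : IsWythoffSwap W) (n : ℕ) :
    W n < lowerWythoff (n + 1) := by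
  rcases lowerWythoff_or_upperWythoff n with ⟨k, rfl⟩ | ⟨k, -, rfl⟩
  · rw [(hW k).1]
    exact upperWythoff_lt_lowerWythoff (Nat.lt_add_one _)
  · rw [(hW k).2]
    have := lowerWythoff_strictMono.le_apply (x := upperWythoff k + 1)
    have := upperWythoff_eq k
    omega

lemma sum_range_add_one (hW : IsWythoffSwap W) (n : ℕ) :
    ∑ j ∈ range n, (W j + 1) = n * lowerWythoffCount n := by
  induction n with
  | zero => simp
  | succ n ih =>
    rw [sum_range_succ, ih]
    rcases lowerWythoff_or_upperWythoff n with ⟨k, rfl⟩ | ⟨k, hk, rfl⟩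
    · rw [(hW k).1, upperWythoff_eq, lowerWythoffCount_lowerWythoff,
        lowerWythoffCount_lowerWythoff_add_one]
      ring
    · rw [(hW k).2, lowerWythoffCount_upperWythoff hk, lowerWythoffCount_upperWythoff_add_one hk]
      ring

lemma forall_ne_add_one_iff (hW : IsWythoffSwap W) {n m : ℕ} (hm : 0 < m) :
    (∀ i ∈ Icc 1 n, W (i - 1) + 1 ≠ m) ↔ n ≤ W (m - 1) := by
  constructor
  · intro h
    by_contra! hlt
    refine h (W (m - 1) + 1) (mem_Icc.2 ⟨by omega, hlt⟩) ?_
    rw [Nat.add_sub_cancel, hW.involutive]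
    omega
  · rintro h i hi rfl
    rw [Nat.add_sub_cancel, hW.involutive] at h
    grind

lemma venkatachalaAdmissible_iff (hW : IsWythoffSwap W) (n m : ℕ) :
    VenkatachalaAdmissible (fun i => W (i - 1) + 1) (n + 1) m ↔
      0 < m ∧ n ≤ W (m - 1) ∧ m ≡ lowerWythoffCount n [MOD n + 1] := by
  have hsum : ∑ i ∈ Icc 1 n, (W (i - 1) + 1) = n * lowerWythoffCount n := by
    rw [← Ico_add_one_right_eq_Icc, sum_Ico_eq_sum_range, Nat.add_sub_cancel,
      ← hW.sum_range_add_one]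
    simp only [Nat.add_sub_cancel_left]
  rw [VenkatachalaAdmissible, Nat.add_sub_cancel, hsum, Nat.dvd_mul_add_iff_modEq]
  exact and_congr_right fun hm => and_congr_left' (hW.forall_ne_add_one_iff hm)

lemma isLeast_venkatachalaAdmissible (hW : IsWythoffSwap W) (n : ℕ) :
    IsLeast {m | VenkatachalaAdmissible (fun i => W (i - 1) + 1) (n + 1) m} (W n + 1) := by
  simp only [hW.venkatachalaAdmissible_iff]
  have hsum := hW.sum_range_add_one (n + 1)
  rw [sum_range_succ, hW.sum_range_add_one] at hsum
  refine ⟨⟨(W n).succ_pos, by rw [Nat.add_sub_cancel, hW.involutive],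
    (Nat.dvd_mul_add_iff_modEq _ _ _).1 ⟨_, hsum⟩⟩, ?_⟩
  rintro m ⟨hm, hunused, hmod⟩
  by_contra! hlt
  rcases lowerWythoff_or_upperWythoff n with ⟨k, rfl⟩ | ⟨k, hk, rfl⟩
  · rw [(hW k).1, upperWythoff_eq] at hlt
    rw [lowerWythoffCount_lowerWythoff] at hmod
    have hkL := lowerWythoff_strictMono.le_apply (x := k)
    obtain rfl : m = k := hmod.eq_of_abs_lt (abs_sub_lt_iff.2 ⟨by omega, by omega⟩)
    have htaken := hW.lt_lowerWythoff_add_one (m - 1)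
    rw [Nat.sub_add_cancel hm] at htaken
    omega
  · rw [(hW k).2] at hlt
    rw [lowerWythoffCount_upperWythoff hk] at hmod
    have := upperWythoff_eq k
    have hm_eq : m = lowerWythoff k + 1 :=
      hmod.eq_of_abs_lt (abs_sub_lt_iff.2 ⟨by omega, by omega⟩)
    omega

end IsWythoffSwap

/-- Venkatachala's greedy sequence and the Wythoff swap sequence:
with `f(1) = 1` and, for `n ≥ 2`, `f(n)` the least positive integer not among
`f(1), …, f(n−1)` such that `n` divides `f(1) + ⋯ + f(n)`, and `W` the
Wythoff swap sequence, one has `W(n) = f(n+1) − 1` for all `n ≥ 1`. -/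
theorem wythoff_swap_eq_venkatachala_shifted
    (φ : ℝ) (hφ : φ = (1 + Real.sqrt 5) / 2)
    (L U : ℕ → ℕ)
    (hL : ∀ n : ℕ, L n = ⌊(n : ℝ) * φ⌋₊)
    (hU : ∀ n : ℕ, U n = ⌊(n : ℝ) * φ ^ 2⌋₊)
    (W : ℕ → ℕ) (hW0 : W 0 = 0)
    (hWL : ∀ k : ℕ, 1 ≤ k → W (L k) = U k)
    (hWU : ∀ k : ℕ, 1 ≤ k → W (U k) = L k)
    (f : ℕ → ℕ) (hf1 : f 1 = 1)
    (hf : ∀ n : ℕ, 2 ≤ n →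
      IsLeast {m : ℕ | 0 < m ∧ (∀ i ∈ Finset.Icc 1 (n - 1), f i ≠ m) ∧
        n ∣ ((∑ i ∈ Finset.Icc 1 (n - 1), f i) + m)} (f n)) :
    ∀ n : ℕ, 1 ≤ n → W n = f (n + 1) - 1 := by
  subst hφ
  obtain rfl : L = lowerWythoff := funext hL
  obtain rfl : U = upperWythoff := funext hU
  have hW : IsWythoffSwap W := fun k => by
    rcases k.eq_zero_or_pos with rfl | hk
    · simp [upperWythoff, hW0]
    · exact ⟨hWL k hk, hWU k hk⟩
  have hfW := eq_of_isLeast_venkatachalaAdmissible (g := fun i => W (i - 1) + 1)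
    (by simp [hf1, hW0]) hf fun n hn => by
      obtain ⟨n, rfl⟩ := Nat.exists_eq_add_of_le' hn
      exact hW.isLeast_venkatachalaAdmissible (n + 1)
  intro n _
  rw [hfW (n + 1) n.succ_pos, Nat.add_sub_cancel, Nat.add_sub_cancel]
end
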